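/- arXiv:1409.4730 — 2 statements merged into one kernel-verified Lean document; each statement's English description precedes it below -/
import Mathlib

section
/- Let A be an MV-algebra satisfying the identity 2x² = (2x)² for all x (Chang's variety axiom). Then for every natural number n ≥ 1, the identity 2ⁿx² = (2ⁿx)² holds in A. -/
/-- An MV-algebra `(A, ⊕, ¬, 0)`. -/
class MV (A : Type*) where
  op : A → A → A
  neg : A → A
  zero : A
  op_assoc : ∀ x y z : A, op (op x y) z = op x (op y z)
  op_comm : ∀ x y : A, op x y = op y x
  op_zero : ∀ x : A, op x zero = x
  neg_neg : ∀ x : A, neg (neg x) = x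
  op_neg_zero : ∀ x : A, op x (neg zero) = neg zero
  mv6 : ∀ x y : A, op (neg (op (neg x) y)) y = op (neg (op (neg y) x)) x

namespace MV

variable {A : Type*} [MV A]

/-- `1 := ¬0`. -/
def one : A := neg zero

/-- `x ⊙ y := ¬(¬x ⊕ ¬y)`. -/
def odot (x y : A) : A := neg (op (neg x) (neg y))

/-- `sup(x,y) := (x ⊙ ¬y) ⊕ y`. -/
def ssup (x y : A) : A := op (odot x (neg y)) y

/-- `inf(x,y) := (x ⊕ ¬y) ⊙ y`. -/
def sinf (x y : A) : A := odot (op x (neg y)) y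

/-- `x ≤ y` iff `¬x ⊕ y = 1`. -/
def le (x y : A) : Prop := op (neg x) y = one

/-- `x ≤ y` iff `inf(x,y) = x`. -/
def leInf (x y : A) : Prop := sinf x y = x

/-- `n`-fold sum `nx = x ⊕ ⋯ ⊕ x`. -/
def nsm : ℕ → A → A
  | 0, _ => zero
  | n + 1, x => op x (nsm n x)

/-- `x² := x ⊙ x`. -/
def sq (x : A) : A := odot x x

end MV

namespace MV

variable {A : Type*} [MV A]

theorem nsm_one (x : A) : nsm 1 x = x :=
  op_zero x

theorem nsm_add (m k : ℕ) (x : A) : nsm (m + k) x = op (nsm m x) (nsm k x) := by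
  induction m with
  | zero => rw [Nat.zero_add, nsm, op_comm, op_zero]
  | succ m ih => rw [Nat.succ_add, nsm, nsm, ih, op_assoc]

theorem nsm_two_pow_succ (n : ℕ) (x : A) :
    nsm (2 ^ (n + 1)) x = op (nsm (2 ^ n) x) (nsm (2 ^ n) x) := by
  rw [pow_succ, mul_two, nsm_add]

theorem nsm_two_pow_sq (chang : ∀ x : A, op (sq x) (sq x) = sq (op x x)) (n : ℕ) (x : A) :
    nsm (2 ^ n) (sq x) = sq (nsm (2 ^ n) x) := by
  induction n with
  | zero => rw [pow_zero, nsm_one, nsm_one]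
  | succ n ih =>
    calc nsm (2 ^ (n + 1)) (sq x)
        = op (sq (nsm (2 ^ n) x)) (sq (nsm (2 ^ n) x)) := by rw [nsm_two_pow_succ, ih]
      _ = sq (nsm (2 ^ (n + 1)) x) := by rw [chang, nsm_two_pow_succ]

end MV

open MV in
/-- If `2x² = (2x)²` holds in an MV-algebra then for every `n ≥ 1`,
`2ⁿx² = (2ⁿx)²` holds. -/
theorem chang_pow_two_identity {A : Type*} [MV A]
    (chang : ∀ x : A, op (sq x) (sq x) = sq (op x x)) :
    ∀ n : ℕ, 1 ≤ n → ∀ x : A, nsm (2 ^ n) (sq x) = sq (nsm (2 ^ n) x) :=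
  fun n _ x => nsm_two_pow_sq chang n x
end

section
/- Let A be a nontrivial MV-algebra (i.e. 0 ≠ 1) satisfying the identity 2x² = (2x)². Then there is no element x ∈ A with x = ¬x. -/
namespace MV

variable {A : Type*} [MV A]

theorem zero_op (x : A) : op zero x = x := by
  rw [op_comm, op_zero]

theorem neg_one : neg (one : A) = zero :=
  neg_neg zero

theorem neg_op_self (x : A) : op (neg x) x = one := by
  have h := mv6 (neg zero) x
  rwa [neg_neg, zero_op, op_neg_zero] at h

theorem odot_neg_self (x : A) : odot x (neg x) = zero := by
  rw [odot, neg_neg, neg_op_self, neg_one]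

theorem sq_one : sq (one : A) = one := by
  rw [sq, odot, neg_one, op_zero]
  rfl

end MV

open MV in
/-- In a nontrivial MV-algebra satisfying `2x² = (2x)²`, no element equals its own negation. -/
theorem chang_no_fixpoint_of_neg {A : Type*} [MV A]
    (nontrivial : (zero : A) ≠ one)
    (chang : ∀ x : A, op (sq x) (sq x) = sq (op x x)) :
    ∀ x : A, x ≠ neg x := by
  intro x hx
  have double_eq_one : op x x = one := by
    nth_rewrite 1 [hx]
    exact neg_op_self x
  have sq_eq_zero : sq x = zero := by
    rw [MV.sq]
    nth_rewrite 2 [hx]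
    exact odot_neg_self x
  apply nontrivial
  simpa only [sq_eq_zero, double_eq_one, op_zero, sq_one] using chang x
end
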